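/- arXiv:2404.14423 — 5 statements merged into one kernel-verified Lean document; each statement's English description precedes it below -/
import Mathlib

section
/- Let S be a nonempty finite set and consider the lattice of partitions of S ordered by refinement, with top element ⊤ the partition into a single block. For every partition π of S with k blocks, the Möbius function of the partition lattice satisfies μ(π, ⊤) = (−1)^{k−1} (k−1)!. -/
open scoped Classical

/-- The set of partitions of a type `S` (encoded as equivalence relations, i.e. `Setoid S`,
ordered by refinement: `π ≤ σ` iff every block of `π` is contained in a block of `σ`) is
finite whenever `S` is. -/
noncomputable instance setoidFintype {S : Type*} [Fintype S] : Fintype (Setoid S) :=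
  Fintype.ofInjective (fun π : Setoid S => (fun x y => π x y : S → S → Prop))
    fun a b h => Setoid.ext fun x y => iff_of_eq (congrFun (congrFun h x) y)

noncomputable instance setoidLocallyFinite {S : Type*} [Fintype S] :
    LocallyFiniteOrder (Setoid S) :=
  Fintype.toLocallyFiniteOrder

open Finset Polynomial

/-- Fix a setoid `ρ` on `T`. Functions `T → β` whose kernel is `ρ` are in bijection with
injections from the quotient `T/ρ` into `β`. -/
def kerFiberEquiv {T β : Type*} (ρ : Setoid T) :
    {f : T → β // Setoid.ker f = ρ} ≃ (Quotient ρ ↪ β) where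
  toFun f := ⟨Quotient.lift f.1 (fun a b h => by rw [← f.2] at h; exact h),
    fun x y => Quotient.inductionOn₂ x y fun a b h =>
      Quotient.sound (by rw [← f.2]; exact h)⟩
  invFun g := ⟨g ∘ Quotient.mk ρ, Setoid.ext fun a b =>
    ⟨fun h => Quotient.exact (g.injective h),
     fun h => congrArg g (Quotient.sound h)⟩⟩
  left_inv f := Subtype.ext rfl
  right_inv g := by
    ext x
    induction x using Quotient.ind
    rfl

/-- Counting functions `T → Fin t` according to their kernel partition:
`t ^ n = ∑_ρ t^(descending) (number of blocks of ρ)`. -/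
lemma count_lemma (T : Type*) [Fintype T] (t : ℕ) :
    t ^ (Fintype.card T) = ∑ ρ : Setoid T, t.descFactorial (Nat.card (Quotient ρ)) := by
  classical
  have h1 : Fintype.card (T → Fin t) = t ^ Fintype.card T := by simp
  rw [← h1]
  have h2 := Fintype.sum_fiberwise (fun f : T → Fin t => Setoid.ker f) (fun _ => (1 : ℕ))
  simp only [Finset.sum_const, smul_eq_mul, mul_one, Finset.card_univ] at h2
  rw [← h2]
  refine Finset.sum_congr rfl fun ρ _ => ?_
  rw [Fintype.card_congr (kerFiberEquiv ρ), Fintype.card_embedding_eq,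
    Fintype.card_fin, Nat.card_eq_fintype_card]

lemma descPochhammer_eval_neg_one' (m : ℕ) :
    (descPochhammer ℝ m).eval (-1) = (-1) ^ m * m.factorial := by
  induction m with
  | zero => simp
  | succ n ih =>
    rw [descPochhammer_succ_right, eval_mul, ih]
    simp [Nat.factorial_succ, pow_succ]
    ring

lemma card_quot_pos {T : Type*} [Fintype T] [Nonempty T] (ρ : Setoid T) :
    Nat.card (Quotient ρ) ≠ 0 := by
  have : Nonempty (Quotient ρ) := Nonempty.map (Quotient.mk ρ) ‹_›
  simp [Nat.card_eq_fintype_card, Fintype.card_ne_zero]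

/-- The key combinatorial identity: if `T` has at least two elements, then summing
`(-1)^(k-1) (k-1)!` over all partitions of `T` (with `k` the number of blocks) gives `0`. -/
lemma kci (T : Type*) [Fintype T] (h2 : 1 < Fintype.card T) :
    ∑ ρ : Setoid T, (-1 : ℝ) ^ (Nat.card (Quotient ρ) - 1) *
      (Nat.card (Quotient ρ) - 1).factorial = 0 := by
  classical
  have hne : Nonempty T := Fintype.card_pos_iff.mp (by omega)
  set n := Fintype.card T with hn
  have hP : (X : ℝ[X]) ^ n = ∑ ρ : Setoid T, descPochhammer ℝ (Nat.card (Quotient ρ)) := by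
    have : ((X : ℝ[X]) ^ n - ∑ ρ : Setoid T, descPochhammer ℝ (Nat.card (Quotient ρ))) = 0 := by
      apply Polynomial.eq_zero_of_infinite_isRoot
      refine (Set.infinite_range_of_injective (Nat.cast_injective (R := ℝ))).mono ?_
      rintro x ⟨t, rfl⟩
      have := count_lemma T t
      simp only [Set.mem_setOf_eq, IsRoot, eval_sub, eval_pow, eval_X, eval_finset_sum,
        descPochhammer_eval_eq_descFactorial, sub_eq_zero]
      exact_mod_cast congrArg (Nat.cast : ℕ → ℝ) this
    linear_combination this
  have hP2 : (X : ℝ[X]) * X ^ (n - 1) =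
      ∑ ρ : Setoid T, X * (descPochhammer ℝ (Nat.card (Quotient ρ) - 1)).comp (X - 1) := by
    rw [← pow_succ', Nat.sub_add_cancel (by omega), hP]
    refine Finset.sum_congr rfl fun ρ _ => ?_
    rw [← descPochhammer_succ_left,
      Nat.sub_add_cancel (Nat.one_le_iff_ne_zero.mpr (card_quot_pos ρ))]
  rw [← Finset.mul_sum] at hP2
  have hP3 := mul_left_cancel₀ (Polynomial.X_ne_zero) hP2
  have := congrArg (Polynomial.eval (0 : ℝ)) hP3
  simp only [eval_pow, eval_X, eval_finset_sum, eval_comp, eval_sub, eval_one, zero_sub] at this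
  rw [zero_pow (by omega)] at this
  rw [eq_comm, Finset.sum_congr rfl (fun (ρ : Setoid T) _ =>
    (descPochhammer_eval_neg_one' (Nat.card (Quotient ρ) - 1)).symm)]
  exact this

/-- The quotient of `Quotient r` by the setoid corresponding (under `Setoid.correspondence`)
to a setoid `s ≥ r` is equivalent to the quotient by `s`. -/
def corrQuotEquiv {α : Type*} (r : Setoid α) (s : {s : Setoid α // r ≤ s}) :
    Quotient (r.correspondence s) ≃ Quotient s.1 where
  toFun := Quotient.lift
    (Quotient.lift (Quotient.mk s.1) (fun _ _ h => Quotient.sound (s.2 h)))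
    (fun q q' h => Quotient.inductionOn₂ q q'
      (fun _ _ hab => Quotient.sound hab) h)
  invFun := Quotient.lift (fun a => Quotient.mk _ (Quotient.mk r a))
    (fun a b h => Quotient.sound (show (r.correspondence s) ⟦a⟧ ⟦b⟧ from h))
  left_inv q := by
    induction q using Quotient.ind with
    | _ q => induction q using Quotient.ind with
      | _ a => rfl
  right_inv q := by
    induction q using Quotient.ind with
    | _ a => rfl

lemma card_corr {α : Type*} (r : Setoid α) (s : {s : Setoid α // r ≤ s}) :
    Nat.card (Quotient s.1) = Nat.card (Quotient (r.correspondence s)) :=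
  Nat.card_congr (corrQuotEquiv r s).symm

/-- The sum of `(-1)^(k-1) (k-1)!` over the interval `[π, ⊤]` vanishes when `π ≠ ⊤`. -/
lemma sum_Icc_g {S : Type*} [Fintype S] [Nonempty S] (π : Setoid S) (hπ : π ≠ ⊤) :
    ∑ τ ∈ Finset.Icc π (⊤ : Setoid S),
      (-1 : ℝ) ^ (Nat.card (Quotient τ) - 1) * (Nat.card (Quotient τ) - 1).factorial = 0 := by
  classical
  rw [Finset.sum_subtype (p := fun x => π ≤ x) (Finset.Icc π ⊤) (fun x => by simp)
    (fun τ => (-1 : ℝ) ^ (Nat.card (Quotient τ) - 1) * (Nat.card (Quotient τ) - 1).factorial)]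
  have hcard : 1 < Fintype.card (Quotient π) := by
    have : ¬ Subsingleton (Quotient π) := fun h => hπ (Quotient.subsingleton_iff.mp h)
    have := not_subsingleton_iff_nontrivial.mp this
    exact Fintype.one_lt_card
  calc ∑ s : {s : Setoid S // π ≤ s},
        (-1 : ℝ) ^ (Nat.card (Quotient s.1) - 1) * (Nat.card (Quotient s.1) - 1).factorial
      = ∑ s : {s : Setoid S // π ≤ s},
        (-1 : ℝ) ^ (Nat.card (Quotient (π.correspondence s)) - 1) *
          (Nat.card (Quotient (π.correspondence s)) - 1).factorial := by
        refine Finset.sum_congr rfl fun s _ => by rw [card_corr]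
    _ = ∑ ρ : Setoid (Quotient π),
        (-1 : ℝ) ^ (Nat.card (Quotient ρ) - 1) * (Nat.card (Quotient ρ) - 1).factorial :=
        Equiv.sum_comp (π.correspondence).toEquiv
          (fun ρ => (-1 : ℝ) ^ (Nat.card (Quotient ρ) - 1) *
            (Nat.card (Quotient ρ) - 1).factorial)
    _ = 0 := kci _ hcard

lemma mu_top_eq {S : Type*} [Fintype S] [Nonempty S] (π : Setoid S) :
    IncidenceAlgebra.mu ℝ π (⊤ : Setoid S) =
      (-1 : ℝ) ^ (Nat.card (Quotient π) - 1) * (Nat.card (Quotient π) - 1).factorial := by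
  classical
  induction π using WellFoundedGT.induction with
  | _ τ ih =>
    rcases eq_or_ne τ ⊤ with rfl | hne
    · have : Subsingleton (Quotient (⊤ : Setoid S)) := Quotient.subsingleton_iff.mpr rfl
      have h1 : Nat.card (Quotient (⊤ : Setoid S)) = 1 := by
        haveI : Nonempty (Quotient (⊤ : Setoid S)) :=
          Nonempty.map (Quotient.mk _) ‹Nonempty S›
        exact Nat.card_unique
      rw [IncidenceAlgebra.mu_self, h1]
      norm_num
    · rw [IncidenceAlgebra.mu_eq_neg_sum_Ioc_of_ne hne]
      have hsum := sum_Icc_g τ hne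
      rw [Finset.Icc_eq_cons_Ioc (le_top), Finset.sum_cons] at hsum
      have hIoc : ∑ x ∈ Finset.Ioc τ (⊤ : Setoid S), IncidenceAlgebra.mu ℝ x ⊤ =
          ∑ x ∈ Finset.Ioc τ (⊤ : Setoid S),
            (-1 : ℝ) ^ (Nat.card (Quotient x) - 1) * (Nat.card (Quotient x) - 1).factorial :=
        Finset.sum_congr rfl fun x hx => ih x (Finset.mem_Ioc.mp hx).1
      rw [hIoc]
      linarith

/-- In the lattice of partitions of a nonempty finite set `S`, ordered by refinement, with
top element `⊤` the partition into a single block, the Möbius function satisfies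
`μ(π, ⊤) = (−1)^(k−1) * (k−1)!` where `k` is the number of blocks of the partition `π`. -/
theorem mu_partition_lattice_top {S : Type*} [Fintype S] [Nonempty S] (π : Setoid S)
    (k : ℕ) (hk : k = Nat.card (Quotient π)) :
    IncidenceAlgebra.mu ℝ π (⊤ : Setoid S) =
      (-1 : ℝ) ^ (k - 1) * (k - 1).factorial := by
  subst hk
  exact mu_top_eq π
end

section
/- Let N be a finite set, w : N → ℝ a weight function, and F, G : 𝒫(N) → ℝ. If F(S) = Σ_{T ⊆ S} G(T) · Π_{i ∈ S \ T} w(i) holds for every S ⊆ N, then G(S) = Σ_{T ⊆ S} (−1)^{|S| − |T|} F(T) · Π_{i ∈ S \ T} w(i) holds for every S ⊆ N. -/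
open Finset

lemma sign_sum_aux {N : Type*} [DecidableEq N] (S U : Finset N) (hU : U ⊆ S) :
    ∑ T ∈ S.powerset.filter (fun T => U ⊆ T), (-1 : ℝ) ^ (S.card - T.card)
      = if U = S then 1 else 0 := by
  have hbij : ∑ T ∈ S.powerset.filter (fun T => U ⊆ T), (-1 : ℝ) ^ (S.card - T.card)
      = ∑ V ∈ (S \ U).powerset, (-1 : ℝ) ^ ((S \ U).card - V.card) := by
    refine Finset.sum_nbij' (fun T => T \ U) (fun V => U ∪ V) ?_ ?_ ?_ ?_ ?_
    · intro T hT
      simp only [mem_filter, mem_powerset] at hT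
      exact mem_powerset.2 (sdiff_subset_sdiff hT.1 Subset.rfl)
    · intro V hV
      rw [mem_powerset] at hV
      simp only [mem_filter, mem_powerset]
      exact ⟨union_subset hU (hV.trans sdiff_subset), subset_union_left⟩
    · intro T hT
      simp only [mem_filter, mem_powerset] at hT
      exact union_sdiff_of_subset hT.2
    · intro V hV
      rw [mem_powerset] at hV
      exact union_sdiff_cancel_left (disjoint_sdiff.mono_right hV)
    · intro T hT
      simp only [mem_filter, mem_powerset] at hT
      congr 1
      have h1 := card_le_card hT.1
      have h2 := card_le_card hT.2
      have h3 := card_le_card hU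
      rw [card_sdiff_of_subset hU, card_sdiff_of_subset hT.2]
      omega
  rw [hbij]
  have hcast : ∀ V ∈ (S \ U).powerset,
      (-1 : ℝ) ^ ((S \ U).card - V.card)
        = (-1 : ℝ) ^ (S \ U).card * (-1 : ℝ) ^ V.card := by
    intro V hV
    rw [mem_powerset] at hV
    have hle : V.card ≤ (S \ U).card := card_le_card hV
    rw [pow_sub₀ (-1 : ℝ) (by norm_num) hle]
    congr 1
    rw [← inv_pow]
    norm_num
  rw [Finset.sum_congr rfl hcast, ← Finset.mul_sum]
  have : (∑ V ∈ (S \ U).powerset, (-1 : ℝ) ^ V.card)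
      = if S \ U = ∅ then 1 else 0 := by
    have := Finset.sum_powerset_neg_one_pow_card (x := S \ U)
    have h2 : ((∑ m ∈ (S \ U).powerset, (-1 : ℤ) ^ m.card : ℤ) : ℝ)
        = ∑ V ∈ (S \ U).powerset, (-1 : ℝ) ^ V.card := by push_cast; ring_nf
    rw [← h2, this]
    split <;> norm_num
  rw [this]
  by_cases hUS : U = S
  · simp [hUS]
  · have hne : S \ U ≠ ∅ := by
      rw [Ne, sdiff_eq_empty_iff_subset]
      intro hSU
      exact hUS (Subset.antisymm hU hSU)
    simp [hne, hUS]

/-- **Weighted powerset Möbius inversion**: for a finite set `N`, weights `w : N → ℝ` and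
`F G : 𝒫(N) → ℝ`, if `F(S) = Σ_{T ⊆ S} G(T) · Π_{i ∈ S \ T} w(i)` for every `S ⊆ N`, then
`G(S) = Σ_{T ⊆ S} (−1)^(|S| − |T|) F(T) · Π_{i ∈ S \ T} w(i)` for every `S ⊆ N`. -/
theorem weighted_powerset_inversion {N : Type*} [Fintype N] [DecidableEq N]
    (w : N → ℝ) (F G : Finset N → ℝ)
    (h : ∀ S : Finset N, F S = ∑ T ∈ S.powerset, G T * ∏ i ∈ S \ T, w i) :
    ∀ S : Finset N,
      G S = ∑ T ∈ S.powerset, (-1 : ℝ) ^ (S.card - T.card) * F T * ∏ i ∈ S \ T, w i := by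
  intro S
  have step1 : ∑ T ∈ S.powerset, (-1 : ℝ) ^ (S.card - T.card) * F T * ∏ i ∈ S \ T, w i
      = ∑ T ∈ S.powerset, ∑ U ∈ T.powerset,
          G U * ((-1 : ℝ) ^ (S.card - T.card) * (∏ i ∈ T \ U, w i) * ∏ i ∈ S \ T, w i) := by
    refine Finset.sum_congr rfl fun T _ => ?_
    rw [h T, Finset.mul_sum, Finset.sum_mul]
    exact Finset.sum_congr rfl fun U _ => by ring
  rw [step1]
  rw [Finset.sum_comm' (t' := S.powerset)
    (s' := fun U => S.powerset.filter (fun T => U ⊆ T)) (by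
      intro T U
      simp only [mem_filter, mem_powerset]
      constructor
      · rintro ⟨h1, h2⟩; exact ⟨⟨h1, h2⟩, h2.trans h1⟩
      · rintro ⟨⟨h1, h2⟩, _⟩; exact ⟨h1, h2⟩)]
  have step2 : ∀ U ∈ S.powerset,
      ∑ T ∈ S.powerset.filter (fun T => U ⊆ T),
        G U * ((-1 : ℝ) ^ (S.card - T.card) * (∏ i ∈ T \ U, w i) * ∏ i ∈ S \ T, w i)
      = G U * (∏ i ∈ S \ U, w i) * (if U = S then 1 else 0) := by
    intro U hU
    rw [mem_powerset] at hU
    have hprod : ∀ T ∈ S.powerset.filter (fun T => U ⊆ T),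
        G U * ((-1 : ℝ) ^ (S.card - T.card) * (∏ i ∈ T \ U, w i) * ∏ i ∈ S \ T, w i)
        = G U * (∏ i ∈ S \ U, w i) * (-1 : ℝ) ^ (S.card - T.card) := by
      intro T hT
      simp only [mem_filter, mem_powerset] at hT
      have : (∏ i ∈ T \ U, w i) * ∏ i ∈ S \ T, w i = ∏ i ∈ S \ U, w i := by
        rw [← Finset.prod_union (Finset.disjoint_sdiff.mono_left sdiff_subset)]
        · congr 1
          ext x
          simp only [mem_union, mem_sdiff]
          constructor
          · rintro (⟨hx, hxu⟩ | ⟨hx, hxt⟩)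
            · exact ⟨hT.1 hx, hxu⟩
            · exact ⟨hx, fun hu => hxt (hT.2 hu)⟩
          · rintro ⟨hx, hxu⟩
            by_cases hxt : x ∈ T
            · exact Or.inl ⟨hxt, hxu⟩
            · exact Or.inr ⟨hx, hxt⟩
      rw [← this]; ring
    rw [Finset.sum_congr rfl hprod, ← Finset.mul_sum, sign_sum_aux S U hU]
  rw [Finset.sum_congr rfl step2]
  rw [Finset.sum_eq_single S (fun U _ hne => by simp [hne])
    (fun hS => absurd (mem_powerset_self S) hS)]
  simp
end

section
/- Let S be a nonempty finite set and let m, k be real-valued functions on the nonempty subsets of S. Suppose that for every nonempty T ⊆ S, m(T) = Σ_{π ∈ Π(T)} Π_{B ∈ π} k(B), where Π(T) is the set of partitions of T. Then for every nonempty T ⊆ S, k(T) = Σ_{π ∈ Π(T)} (−1)^{|π| − 1} (|π| − 1)! · Π_{B ∈ π} m(B), where |π| denotes the number of blocks of π. -/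
/-!
Expanding every `m B` by the hypothesis turns `∏_{B ∈ π} m B` into the sum of `∏_{C ∈ σ} k C`
over the refinements `σ ≤ π`. After exchanging the sums, the coefficient of `∏_{C ∈ σ} k C` is the
sum of `(-1)^(|π|-1) (|π|-1)!` over the coarsenings `π ≥ σ`; these correspond to the partitions of
the set of blocks of `σ`, so it suffices that `∑_{π ∈ Π(E)} (-1)^(|π|-1) (|π|-1)! = [|E| = 1]`.
Removing the block that contains a fixed `a ∈ E` reduces this to
`∑_{π ∈ Π(D)} (-1)^|π| |π|! = (-1)^|D|`, which follows by induction on `D` after removing a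
marked block.
-/

open Finset
open scoped Nat

theorem Finset.sum_powerset_neg_one_pow_card_eq_ite {α R : Type*} [DecidableEq α] [CommRing R]
    (E : Finset α) : ∑ D ∈ E.powerset, (-1 : R) ^ #D = if E = ∅ then 1 else 0 := by
  simpa using congrArg (Int.cast : ℤ → R) (sum_powerset_neg_one_pow_card (x := E))

namespace Finpartition

section Lattice

variable {α : Type*} [Lattice α] [OrderBot α] {a : α}

theorem card_parts_eq_one_iff (ha : a ≠ ⊥) {P : Finpartition a} :
    #P.parts = 1 ↔ P = indiscrete ha := by
  refine ⟨fun h => ?_, fun h => by simp [h]⟩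
  obtain ⟨b, hb⟩ := card_eq_one.1 h
  have hba : b = a := by simpa [hb] using P.sup_parts
  ext1
  rw [hb, hba, indiscrete_parts]

end Lattice

section GeneralizedBooleanAlgebra

variable {α : Type*} [GeneralizedBooleanAlgebra α] [DecidableEq α] {a b : α}

theorem avoid_parts_of_mem {P : Finpartition a} (hb : b ∈ P.parts) :
    (P.avoid b).parts = P.parts.erase b := by
  ext c
  simp only [mem_avoid, mem_erase]
  constructor
  · rintro ⟨c, hc, hcb, rfl⟩
    have hne : c ≠ b := by rintro rfl; exact hcb le_rfl
    have hdisj : Disjoint c b := P.disjoint hc hb hne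
    rw [hdisj.sdiff_eq_left]
    exact ⟨hne, hc⟩
  · rintro ⟨hne, hc⟩
    have hdisj : Disjoint c b := P.disjoint hc hb hne
    exact ⟨c, hc, fun hcb => P.ne_bot hc (hdisj.eq_bot_of_le hcb), hdisj.sdiff_eq_left⟩

end GeneralizedBooleanAlgebra

variable {α : Type*} [DecidableEq α]

instance {s : Finset α} : DecidableRel ((· ≤ ·) : Finpartition s → Finpartition s → Prop) :=
  fun P Q => inferInstanceAs (Decidable (∀ b ∈ P.parts, ∃ c ∈ Q.parts, b ≤ c))

section RemoveBlock

variable {M : Type*} [AddCommMonoid M]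

theorem sum_filter_mem_parts {E C : Finset α} (hC : C.Nonempty) (hCE : C ⊆ E) (g : ℕ → M) :
    ∑ P : Finpartition E with C ∈ P.parts, g #P.parts =
      ∑ P : Finpartition (E \ C), g (#P.parts + 1) := by
  have hCP (P : Finpartition (E \ C)) : C ∉ P.parts := fun h => by
    obtain ⟨x, hx⟩ := hC
    exact (mem_sdiff.1 (P.le h hx)).2 hx
  refine sum_nbij' (fun P => P.avoid C)
    (fun P => P.extend hC.ne_empty sdiff_disjoint (sdiff_union_of_subset hCE)) ?_ ?_ ?_ ?_ ?_
  · simp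
  · simp
  · intro P hP
    replace hP : C ∈ P.parts := by simpa using hP
    ext1; simp [avoid_parts_of_mem hP, insert_erase hP]
  · intro P _
    ext1; simp [avoid_parts_of_mem, erase_insert (hCP P)]
  · intro P hP
    replace hP : C ∈ P.parts := by simpa using hP
    rw [avoid_parts_of_mem hP, card_erase_add_one hP]

theorem sum_card_parts_smul (E : Finset α) (g : ℕ → M) :
    ∑ P : Finpartition E, #P.parts • g #P.parts =
      ∑ D ∈ E.powerset.erase E, ∑ P : Finpartition D, g (#P.parts + 1) := by
  calc ∑ P : Finpartition E, #P.parts • g #P.parts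
      = ∑ P : Finpartition E, ∑ C ∈ P.parts, g #P.parts := by simp
    _ = ∑ C ∈ E.powerset with C.Nonempty, ∑ P : Finpartition E with C ∈ P.parts, g #P.parts :=
        sum_comm' fun P C => by
          simpa using fun hC => ⟨P.le hC, P.nonempty_of_mem_parts hC⟩
    _ = ∑ C ∈ E.powerset with C.Nonempty, ∑ P : Finpartition (E \ C), g (#P.parts + 1) :=
        sum_congr rfl fun C hC => by
          simp only [mem_filter, mem_powerset] at hC
          exact sum_filter_mem_parts hC.2 hC.1 g
    _ = _ := by
        refine sum_nbij' (E \ ·) (E \ ·) ?_ ?_ ?_ ?_ (fun _ _ => rfl) <;> grind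

theorem sum_card_parts_eq_sum_powerset_erase {a : α} {E : Finset α} (ha : a ∈ E) (g : ℕ → M) :
    ∑ P : Finpartition E, g #P.parts =
      ∑ D ∈ (E.erase a).powerset, ∑ P : Finpartition D, g (#P.parts + 1) := by
  calc ∑ P : Finpartition E, g #P.parts
      = ∑ C ∈ E.powerset with a ∈ C, ∑ P : Finpartition E with P.part a = C, g #P.parts :=
        (sum_fiberwise_of_maps_to (fun P _ => by simp [P.part_subset, ha]) _).symm
    _ = ∑ C ∈ E.powerset with a ∈ C, ∑ P : Finpartition E with C ∈ P.parts, g #P.parts := by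
        refine sum_congr rfl fun C hC => sum_congr (filter_congr fun P _ => ?_) fun _ _ => rfl
        simp only [mem_filter] at hC
        exact ⟨fun h => h ▸ P.part_mem.2 ha, fun h => P.part_eq_of_mem h hC.2⟩
    _ = ∑ C ∈ E.powerset with a ∈ C, ∑ P : Finpartition (E \ C), g (#P.parts + 1) :=
        sum_congr rfl fun C hC => by
          simp only [mem_filter, mem_powerset] at hC
          exact sum_filter_mem_parts ⟨a, hC.2⟩ hC.1 g
    _ = _ := by
        refine sum_nbij' (E \ ·) (E \ ·) ?_ ?_ ?_ ?_ (fun _ _ => rfl) <;> grind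

end RemoveBlock

section Signs

variable {R : Type*} [CommRing R]

theorem sum_neg_one_pow_card_parts_mul_factorial (E : Finset α) :
    ∑ P : Finpartition E, (-1 : R) ^ #P.parts * ((#P.parts)! : R) = (-1) ^ #E := by
  induction E using Finset.strongInduction with
  | H E ih =>
  rcases E.eq_empty_or_nonempty with rfl | hE
  · have : Unique (Finpartition (∅ : Finset α)) := inferInstanceAs (Unique (Finpartition ⊥))
    rw [Fintype.sum_unique, parts_eq_empty_iff.2 rfl]
    simp
  have hterm (P : Finpartition E) : (-1 : R) ^ #P.parts * ((#P.parts)! : R) =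
      -(#P.parts • ((-1 : R) ^ (#P.parts - 1) * (#P.parts - 1)!)) := by
    obtain ⟨r, hr⟩ := Nat.exists_eq_add_one_of_ne_zero (P.parts_nonempty hE.ne_empty).card_ne_zero
    rw [hr, nsmul_eq_mul, Nat.factorial_succ]
    push_cast
    ring
  calc ∑ P : Finpartition E, (-1 : R) ^ #P.parts * (#P.parts)!
      = -∑ D ∈ E.powerset.erase E,
          ∑ P : Finpartition D, (-1 : R) ^ #P.parts * ((#P.parts)! : R) := by
        rw [sum_congr rfl fun P _ => hterm P, sum_neg_distrib,
          sum_card_parts_smul E fun r => (-1 : R) ^ (r - 1) * ((r - 1)! : R)]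
        simp only [Nat.add_sub_cancel]
    _ = -∑ D ∈ E.powerset.erase E, (-1) ^ #D := by
        congr 1
        refine sum_congr rfl fun D hD => ih D ?_
        simp only [mem_erase, mem_powerset] at hD
        exact ssubset_of_subset_of_ne hD.2 hD.1
    _ = (-1) ^ #E := by
        rw [sum_erase_eq_sub (mem_powerset_self E), sum_powerset_neg_one_pow_card_eq_ite,
          if_neg hE.ne_empty]
        ring

theorem sum_neg_one_pow_pred_mul_factorial_pred {E : Finset α} (hE : E.Nonempty) :
    ∑ P : Finpartition E, (-1 : R) ^ (#P.parts - 1) * ((#P.parts - 1)! : R) =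
      if #E = 1 then 1 else 0 := by
  obtain ⟨a, ha⟩ := hE
  rw [sum_card_parts_eq_sum_powerset_erase ha fun r => (-1 : R) ^ (r - 1) * ((r - 1)! : R)]
  simp only [Nat.add_sub_cancel, sum_neg_one_pow_card_parts_mul_factorial]
  rw [sum_powerset_neg_one_pow_card_eq_ite]
  refine if_congr ?_ rfl rfl
  rw [← card_eq_zero, card_erase_of_mem ha]
  have := card_pos.2 ⟨a, ha⟩
  omega

end Signs

section Refinement

variable {s : Finset α} {σ π : Finpartition s}

theorem subset_of_le (h : σ ≤ π) {B C : Finset α} (hB : B ∈ π.parts) (hC : C ∈ σ.parts)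
    {x : α} (hxB : x ∈ B) (hxC : x ∈ C) : C ⊆ B := by
  obtain ⟨B', hB', hCB'⟩ := h hC
  rwa [π.eq_of_mem_parts hB hB' hxB (hCB' hxC)]

theorem restrict_parts_of_le (h : σ ≤ π) {B : Finset α} (hB : B ∈ π.parts) :
    (σ.restrict (π.le hB)).parts = σ.parts.filter (· ⊆ B) := by
  ext C
  simp only [restrict, mem_erase, mem_image, mem_filter]
  constructor
  · rintro ⟨hne, D, hD, rfl⟩
    obtain ⟨x, hx⟩ := nonempty_iff_ne_empty.2 hne
    rw [inf_eq_inter, mem_inter] at hx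
    rw [inf_eq_inter, inter_eq_left.2 (subset_of_le h hB hD hx.2 hx.1)]
    exact ⟨hD, subset_of_le h hB hD hx.2 hx.1⟩
  · rintro ⟨hC, hCB⟩
    exact ⟨σ.ne_bot hC, C, hC, inf_eq_left.2 hCB⟩

theorem sup_filter_subset_of_le (h : σ ≤ π) {B : Finset α} (hB : B ∈ π.parts) :
    (σ.parts.filter (· ⊆ B)).sup id = B := by
  rw [← restrict_parts_of_le h hB]
  exact (σ.restrict _).sup_parts

theorem prod_sum_finpartition_eq_sum_filter_le {R : Type*} [CommSemiring R] (π : Finpartition s)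
    (f : Finset α → R) :
    ∏ B ∈ π.parts, ∑ τ : Finpartition B, ∏ C ∈ τ.parts, f C =
      ∑ σ : Finpartition s with σ ≤ π, ∏ C ∈ σ.parts, f C := by
  rw [← prod_attach, ← univ_eq_attach, prod_univ_sum, Fintype.piFinset_univ]
  have hbind_le (x : ∀ B : π.parts, Finpartition B.1) : π.bind (fun B hB => x ⟨B, hB⟩) ≤ π := by
    intro C hC
    obtain ⟨B, hB, hC⟩ := mem_bind.1 hC
    exact ⟨B, hB, (x _).le hC⟩
  refine sum_bij' (fun x _ => π.bind fun B hB => x ⟨B, hB⟩)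
    (fun σ hσ B => σ.restrict (π.le B.2)) (fun x _ => by simpa using hbind_le x)
    (fun _ _ => mem_univ _) ?_ ?_ ?_
  · intro x _
    funext B
    ext1
    rw [restrict_parts_of_le (hbind_le x) B.2]
    ext C
    simp only [mem_filter, mem_bind]
    constructor
    · rintro ⟨⟨A, hA, hC⟩, hCB⟩
      obtain ⟨y, hy⟩ := (x ⟨A, hA⟩).nonempty_of_mem_parts hC
      obtain rfl : A = B := π.eq_of_mem_parts hA B.2 ((x _).le hC hy) (hCB hy)
      exact hC
    · intro hC
      exact ⟨⟨B, B.2, hC⟩, (x B).le hC⟩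
  · intro σ hσ
    replace hσ : σ ≤ π := by simpa using hσ
    ext C
    rw [mem_bind]
    constructor
    · rintro ⟨B, hB, hC⟩
      rw [restrict_parts_of_le hσ hB] at hC
      exact (mem_filter.1 hC).1
    · intro hC
      obtain ⟨B, hB, hCB⟩ := hσ hC
      exact ⟨B, hB, by rw [restrict_parts_of_le hσ hB]; exact mem_filter.2 ⟨hC, hCB⟩⟩
  · intro x _
    rw [bind_parts, prod_biUnion, univ_eq_attach]
    intro A _ A' _ hne
    refine disjoint_left.2 fun C hC hC' => hne (Subtype.ext ?_)
    obtain ⟨y, hy⟩ := (x A).nonempty_of_mem_parts hC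
    exact π.eq_of_mem_parts A.2 A'.2 ((x A).le hC hy) ((x A').le hC' hy)

def coarsen (σ : Finpartition s) (τ : Finpartition σ.parts) : Finpartition s where
  parts := τ.parts.image (·.sup id)
  supIndep := SupIndep.image (f := id) (g := fun t : Finset (Finset α) => t.sup id) <|
    supIndep_iff_pairwiseDisjoint.2 fun _ ht _ hu htu =>
    σ.supIndep.disjoint_sup_sup (τ.le ht) (τ.le hu) (τ.disjoint ht hu htu)
  sup_parts := by
    rw [sup_image, Function.id_comp, τ.sup_parts_apply (f := (·.sup id)) (fun _ _ => sup_union)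
      sup_empty, σ.sup_parts]
  bot_notMem := by
    simp only [mem_image, not_exists, not_and]
    intro t ht h
    obtain ⟨C, hC⟩ := τ.nonempty_of_mem_parts ht
    exact σ.ne_bot (τ.le ht hC) (le_bot_iff.1 (h ▸ le_sup (f := id) hC))

def grouping (h : σ ≤ π) : Finpartition σ.parts where
  parts := π.parts.image fun B => σ.parts.filter (· ⊆ B)
  supIndep := SupIndep.image (f := id) <| supIndep_iff_pairwiseDisjoint.2 fun B hB B' hB' hne =>
    disjoint_filter.2 fun C hC hCB hCB' =>
      σ.ne_bot hC (disjoint_self.1 ((π.disjoint hB hB' hne).mono hCB hCB'))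
  sup_parts := by
    ext C
    simp only [sup_image, Function.id_comp, mem_sup, mem_filter]
    exact ⟨fun ⟨_, _, hC, _⟩ => hC, fun hC => (h hC).imp fun B ⟨hB, hCB⟩ => ⟨hB, hC, hCB⟩⟩
  bot_notMem := by
    simp only [mem_image, not_exists, not_and]
    intro B hB hempty
    have := (σ.restrict (π.le hB)).parts_nonempty (π.ne_bot hB)
    rw [restrict_parts_of_le h hB, hempty] at this
    exact not_nonempty_empty this

theorem le_coarsen (σ : Finpartition s) (τ : Finpartition σ.parts) : σ ≤ σ.coarsen τ := by
  intro C hC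
  obtain ⟨t, ht, hCt⟩ := τ.exists_mem hC
  exact ⟨t.sup id, mem_image_of_mem _ ht, le_sup (f := id) hCt⟩

theorem coarsen_grouping (h : σ ≤ π) : σ.coarsen (grouping h) = π := by
  ext1
  simp only [coarsen, grouping, image_image]
  exact (image_congr fun B hB => sup_filter_subset_of_le h hB).trans image_id

theorem grouping_coarsen (τ : Finpartition σ.parts) : grouping (le_coarsen σ τ) = τ := by
  ext1
  simp only [coarsen, grouping, image_image]
  refine (image_congr fun t ht => ?_).trans image_id
  ext C
  simp only [Function.comp_apply, mem_filter, id]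
  refine ⟨fun ⟨hC, hCt⟩ => ?_, fun hC => ⟨τ.le ht hC, le_sup (f := id) hC⟩⟩
  obtain ⟨x, hx⟩ := σ.nonempty_of_mem_parts hC
  obtain ⟨C', hC', hxC'⟩ := mem_sup.1 (hCt hx)
  rwa [σ.eq_of_mem_parts hC (τ.le ht hC') hx hxC']

theorem card_grouping (h : σ ≤ π) : #(grouping h).parts = #π.parts :=
  card_image_of_injOn fun B hB B' hB' hBB' => by
    rw [← sup_filter_subset_of_le h hB, ← sup_filter_subset_of_le h hB']
    exact congrArg (·.sup id) hBB'

theorem sum_filter_le_eq_sum_finpartition_parts {M : Type*} [AddCommMonoid M]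
    (σ : Finpartition s) (g : ℕ → M) :
    ∑ π with σ ≤ π, g #π.parts = ∑ τ : Finpartition σ.parts, g #τ.parts :=
  sum_bij' (fun π hπ => grouping (mem_filter.1 hπ).2) (fun τ _ => σ.coarsen τ)
    (fun _ _ => mem_univ _) (fun τ _ => mem_filter.2 ⟨mem_univ _, le_coarsen σ τ⟩)
    (fun π hπ => coarsen_grouping _) (fun τ _ => grouping_coarsen τ)
    (fun π hπ => by rw [card_grouping])

end Refinement

end Finpartition

theorem cumulant_moebius_inversion_general {α : Type*} [DecidableEq α] (S : Finset α)
    (m k : Finset α → ℝ)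
    (h : ∀ T ⊆ S, T.Nonempty → m T = ∑ π : Finpartition T, ∏ B ∈ π.parts, k B) :
    ∀ T ⊆ S, T.Nonempty →
      k T = ∑ π : Finpartition T,
        (-1 : ℝ) ^ (π.parts.card - 1) * (π.parts.card - 1).factorial *
          ∏ B ∈ π.parts, m B := by
  intro T hTS hT
  have hm (π : Finpartition T) : ∏ B ∈ π.parts, m B = ∑ σ with σ ≤ π, ∏ C ∈ σ.parts, k C := by
    rw [← π.prod_sum_finpartition_eq_sum_filter_le]
    exact prod_congr rfl fun B hB => h B ((π.le hB).trans hTS) (π.nonempty_of_mem_parts hB)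
  calc k T
      = ∑ σ : Finpartition T, (if #σ.parts = 1 then 1 else 0) * ∏ C ∈ σ.parts, k C := by
        simp [Finpartition.card_parts_eq_one_iff hT.ne_empty]
    _ = ∑ σ : Finpartition T, (∑ π with σ ≤ π,
          (-1 : ℝ) ^ (#π.parts - 1) * ((#π.parts - 1)! : ℝ)) * ∏ C ∈ σ.parts, k C := by
        refine sum_congr rfl fun σ _ => ?_
        rw [σ.sum_filter_le_eq_sum_finpartition_parts fun r => (-1 : ℝ) ^ (r - 1) * ((r - 1)! : ℝ),
          Finpartition.sum_neg_one_pow_pred_mul_factorial_pred (σ.parts_nonempty hT.ne_empty)]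
    _ = ∑ π : Finpartition T, ∑ σ with σ ≤ π,
          (-1 : ℝ) ^ (#π.parts - 1) * ((#π.parts - 1)! : ℝ) * ∏ C ∈ σ.parts, k C := by
        simp_rw [sum_mul]
        exact sum_comm' fun σ π => by simp
    _ = _ := by simp_rw [hm, mul_sum]

/-- **Moment–cumulant inversion on the partition lattice**: let `S` be a nonempty finite
set and `m k` real-valued functions on (nonempty) subsets of `S`. If for every nonempty
`T ⊆ S` we have `m(T) = Σ_{π ∈ Π(T)} Π_{B ∈ π} k(B)` (sum over all partitions `π` of `T`),
then for every nonempty `T ⊆ S`,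
`k(T) = Σ_{π ∈ Π(T)} (−1)^(|π| − 1) (|π| − 1)! · Π_{B ∈ π} m(B)`,
where `|π|` is the number of blocks of `π`. -/
theorem cumulant_moebius_inversion {α : Type*} [DecidableEq α] (S : Finset α)
    (hS : S.Nonempty) (m k : Finset α → ℝ)
    (h : ∀ T ⊆ S, T.Nonempty → m T = ∑ π : Finpartition T, ∏ B ∈ π.parts, k B) :
    ∀ T ⊆ S, T.Nonempty →
      k T = ∑ π : Finpartition T,
        (-1 : ℝ) ^ (π.parts.card - 1) * (π.parts.card - 1).factorial *
          ∏ B ∈ π.parts, m B :=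
  cumulant_moebius_inversion_general S m k h
end

section
/- Let N be a nonempty finite set of spins and J : 𝒫(N) → ℝ a family of coupling constants. Define the energy E(S) = −Σ_{t ⊆ S} J(t) for S ⊆ N, the partition function Z = Σ_{S ⊆ N} exp(−E(S)), and the Boltzmann probabilities p(S) = exp(−E(S)) / Z. Then for every nonempty subset S ⊆ N, the couplings are recovered from the equilibrium probabilities by J(S) = Σ_{t ⊆ S} (−1)^{|S| − |t|} log p(t). -/
open Finset

private lemma alt_sum_powerset {N : Type*} [DecidableEq N] (x : Finset N) :
    ∑ t ∈ x.powerset, (-1 : ℝ) ^ (x.card - t.card) = if x = ∅ then 1 else 0 := by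
  have key : ∀ t ∈ x.powerset, (-1 : ℝ) ^ (x.card - t.card)
      = (-1 : ℝ) ^ x.card * (-1 : ℝ) ^ t.card := by
    intro t ht
    have hle : t.card ≤ x.card := card_le_card (mem_powerset.mp ht)
    have h : x.card - t.card + t.card = x.card := Nat.sub_add_cancel hle
    calc (-1 : ℝ) ^ (x.card - t.card)
        = (-1 : ℝ) ^ (x.card - t.card) * ((-1 : ℝ) ^ t.card * (-1 : ℝ) ^ t.card) := by
          rw [← pow_add, ← two_mul, pow_mul, neg_one_sq, one_pow, mul_one]
      _ = (-1 : ℝ) ^ x.card * (-1 : ℝ) ^ t.card := by rw [← mul_assoc, ← pow_add, h]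
  rw [Finset.sum_congr rfl key, ← Finset.mul_sum]
  have hz : ∑ t ∈ x.powerset, (-1 : ℝ) ^ t.card
      = ((∑ t ∈ x.powerset, (-1 : ℤ) ^ t.card : ℤ) : ℝ) := by push_cast; rfl
  rw [hz, Finset.sum_powerset_neg_one_pow_card]
  by_cases hx : x = ∅
  · simp [hx]
  · simp [hx]

private lemma alt_sum_between {N : Type*} [DecidableEq N] {u S : Finset N} (hu : u ⊆ S) :
    ∑ t ∈ S.powerset.filter (fun t => u ⊆ t), (-1 : ℝ) ^ (S.card - t.card)
      = if u = S then 1 else 0 := by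
  have hbij : ∑ t ∈ S.powerset.filter (fun t => u ⊆ t), (-1 : ℝ) ^ (S.card - t.card)
      = ∑ v ∈ (S \ u).powerset, (-1 : ℝ) ^ ((S \ u).card - v.card) := by
    refine Finset.sum_nbij' (fun t => t \ u) (fun v => v ∪ u) ?_ ?_ ?_ ?_ ?_
    · intro t ht
      rw [mem_filter, mem_powerset] at ht
      exact mem_powerset.mpr (sdiff_subset_sdiff ht.1 Subset.rfl)
    · intro v hv
      rw [mem_powerset] at hv
      rw [mem_filter, mem_powerset]
      constructor
      · exact union_subset (hv.trans sdiff_subset) hu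
      · exact subset_union_right
    · intro t ht
      rw [mem_filter] at ht
      exact sdiff_union_of_subset ht.2
    · intro v hv
      rw [mem_powerset] at hv
      have hd : Disjoint v u := Finset.sdiff_disjoint.mono_left hv
      show (v ∪ u) \ u = v
      rw [union_sdiff_right, sdiff_eq_self_of_disjoint hd]
    · intro t ht
      rw [mem_filter, mem_powerset] at ht
      show (-1 : ℝ) ^ (S.card - t.card) = (-1 : ℝ) ^ ((S \ u).card - (t \ u).card)
      have h1 : (S \ u).card = S.card - u.card := card_sdiff_of_subset hu
      have h2 : (t \ u).card = t.card - u.card := card_sdiff_of_subset ht.2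
      have h3 : u.card ≤ t.card := card_le_card ht.2
      have h4 : t.card ≤ S.card := card_le_card ht.1
      congr 1
      omega
  rw [hbij, alt_sum_powerset]
  have : S \ u = ∅ ↔ u = S := by
    rw [sdiff_eq_empty_iff_subset]
    exact ⟨fun h => Subset.antisymm hu h, fun h => h ▸ Subset.rfl⟩
  by_cases h : u = S
  · simp [this.mpr h, h]
  · rw [if_neg (fun he => h (this.mp he)), if_neg h]

private lemma mobius_inv {N : Type*} [DecidableEq N] (J : Finset N → ℝ) (S : Finset N) :
    ∑ t ∈ S.powerset, (-1 : ℝ) ^ (S.card - t.card) * ∑ u ∈ t.powerset, J u = J S := by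
  have swap : ∑ t ∈ S.powerset, ∑ u ∈ t.powerset, (-1 : ℝ) ^ (S.card - t.card) * J u
      = ∑ u ∈ S.powerset, ∑ t ∈ S.powerset.filter (fun t => u ⊆ t),
          (-1 : ℝ) ^ (S.card - t.card) * J u := by
    refine Finset.sum_comm' ?_
    intro t u
    simp only [mem_powerset, mem_filter]
    constructor
    · rintro ⟨h1, h2⟩; exact ⟨⟨h1, h2⟩, h2.trans h1⟩
    · rintro ⟨⟨h1, h2⟩, _⟩; exact ⟨h1, h2⟩
  calc ∑ t ∈ S.powerset, (-1 : ℝ) ^ (S.card - t.card) * ∑ u ∈ t.powerset, J u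
      = ∑ t ∈ S.powerset, ∑ u ∈ t.powerset, (-1 : ℝ) ^ (S.card - t.card) * J u := by
        simp [Finset.mul_sum]
    _ = ∑ u ∈ S.powerset, (∑ t ∈ S.powerset.filter (fun t => u ⊆ t),
          (-1 : ℝ) ^ (S.card - t.card)) * J u := by
        rw [swap]; simp [Finset.sum_mul]
    _ = ∑ u ∈ S.powerset, (if u = S then 1 else 0) * J u := by
        refine Finset.sum_congr rfl fun u hu => ?_
        rw [alt_sum_between (mem_powerset.mp hu)]
    _ = J S := by
        simp [ite_mul, Finset.sum_ite_eq']

/-- **The inverse problem for equilibrium spin systems.** Let `N` be a nonempty finite set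
of spins and `J : 𝒫(N) → ℝ` coupling constants. Define the energy
`E(S) = −Σ_{t ⊆ S} J(t)`, the partition function `Z = Σ_{S ⊆ N} exp(−E(S))`, and the
Boltzmann probabilities `p(S) = exp(−E(S)) / Z`. Then for every nonempty `S ⊆ N`,
`J(S) = Σ_{t ⊆ S} (−1)^(|S| − |t|) log p(t)`. -/
theorem ising_couplings_from_boltzmann {N : Type*} [Fintype N] [DecidableEq N] [Nonempty N]
    (J E p : Finset N → ℝ) (Z : ℝ)
    (hE : ∀ S : Finset N, E S = -∑ t ∈ S.powerset, J t)
    (hZ : Z = ∑ S : Finset N, Real.exp (-E S))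
    (hp : ∀ S : Finset N, p S = Real.exp (-E S) / Z) :
    ∀ S : Finset N, S.Nonempty →
      J S = ∑ t ∈ S.powerset, (-1 : ℝ) ^ (S.card - t.card) * Real.log (p t) := by
  intro S hS
  have hZpos : 0 < Z := by
    rw [hZ]
    exact Finset.sum_pos (fun s _ => Real.exp_pos _) univ_nonempty
  have hlog : ∀ t : Finset N, Real.log (p t) = (∑ u ∈ t.powerset, J u) - Real.log Z := by
    intro t
    rw [hp, Real.log_div (Real.exp_ne_zero _) (ne_of_gt hZpos), Real.log_exp, hE, neg_neg]
  have hrw : ∑ t ∈ S.powerset, (-1 : ℝ) ^ (S.card - t.card) * Real.log (p t)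
      = (∑ t ∈ S.powerset, (-1 : ℝ) ^ (S.card - t.card) * ∑ u ∈ t.powerset, J u)
        - (∑ t ∈ S.powerset, (-1 : ℝ) ^ (S.card - t.card)) * Real.log Z := by
    rw [Finset.sum_mul, ← Finset.sum_sub_distrib]
    refine Finset.sum_congr rfl fun t ht => ?_
    rw [hlog]
    ring
  rw [hrw, mobius_inv, alt_sum_powerset, if_neg (nonempty_iff_ne_empty.mp hS)]
  ring
end

section
/- Let N be a finite set of players, v : 𝒫(N) → ℝ a coalition value function, and define the synergy w(R) = Σ_{T ⊆ R} (−1)^{|R| − |T|} v(T) for each R ⊆ N. Then for every player i ∈ N, the equal division of synergies equals the classical Shapley value: Σ_{S ⊆ N, i ∈ S} w(S) / |S| = Σ_{S ⊆ N \ {i}} (|S|! · (|N| − |S| − 1)! / |N|!) · (v(S ∪ {i}) − v(S)). -/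
open Finset

open scoped Nat

/-!
Expanding `w` and exchanging the two sums, the left side becomes `∑ T, c T * v T` with
`c T = ∑_{S ⊇ T ∪ {i}} (-1)^(|S| - |T|) / |S|`. Grouping the supersets by size turns `c` into an
alternating sum `∑_k (-1)^k C(m,k) / (t + 1 + k) = t! m! / (t + m + 1)!`, so that for `i ∉ T`
one gets `c (insert i T) = -c T = |T|! (n - |T| - 1)! / n!`, the Shapley weight of `T`.
-/

-- The left side is `∫₀¹ x^t (1 - x)^m dx = B(t + 1, m + 1)`; Pascal's rule gives the recursion.
theorem sum_range_choose_mul_neg_one_pow_div {K : Type*} [Field K] [CharZero K] (m t : ℕ) :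
    ∑ k ∈ range (m + 1), (m.choose k : K) * ((-1) ^ k / (t + 1 + k)) =
      t ! * m ! / (t + m + 1)! := by
  induction m generalizing t with
  | zero =>
    have : (t ! : K) ≠ 0 := Nat.cast_ne_zero.2 (Nat.factorial_ne_zero t)
    simp [Nat.factorial_succ, mul_comm, div_mul_cancel_left₀ this]
  | succ m ih =>
    have shift : ∑ k ∈ range (m + 1), (m.choose k : K) * ((-1) ^ (k + 1) / (t + 1 + ↑(k + 1))) =
        -∑ k ∈ range (m + 1), (m.choose k : K) * ((-1) ^ k / ((t + 1 : ℕ) + 1 + k)) := by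
      rw [← sum_neg_distrib]
      refine sum_congr rfl fun k _ => ?_
      push_cast
      ring
    rw [sum_choose_succ_mul (fun k _ => (-1 : K) ^ k / (t + 1 + k)), shift, ih, ih,
      ← sub_eq_add_neg]
    rw [show t + 1 + m + 1 = t + m + 1 + 1 by ring, show t + (m + 1) + 1 = t + m + 1 + 1 by ring,
      Nat.factorial_succ (t + m + 1), Nat.factorial_succ t, Nat.factorial_succ m]
    have : ((t + m + 1)! : K) ≠ 0 := Nat.cast_ne_zero.2 (Nat.factorial_ne_zero _)
    have : (t + m + 1 + 1 : K) ≠ 0 := by exact_mod_cast Nat.succ_ne_zero (t + m + 1)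
    push_cast
    field_simp
    ring

section Supersets

variable {α : Type*} [Fintype α] [DecidableEq α]

theorem sum_filter_superset_apply_card {M : Type*} [AddCommMonoid M] (A : Finset α)
    (f : ℕ → M) :
    ∑ S ∈ univ.filter (A ⊆ ·), f #S =
      ∑ k ∈ range (#Aᶜ + 1), (#Aᶜ).choose k • f (#A + k) := by
  have supersets : univ.filter (A ⊆ ·) = Aᶜ.powerset.image (A ∪ ·) := by
    rw [compl_eq_univ_sdiff, ← Icc_eq_image_powerset (subset_univ A)]
    ext S
    simp
  have disjoint_of_mem {U : Finset α} (hU : U ∈ Aᶜ.powerset) : Disjoint A U :=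
    disjoint_of_subset_right (mem_powerset.1 hU) disjoint_compl_right
  rw [supersets, sum_image, ← sum_powerset_apply_card (fun j => f (#A + j))]
  · exact sum_congr rfl fun U hU => by rw [card_union_of_disjoint (disjoint_of_mem hU)]
  · intro U hU U' hU' h
    rw [← union_sdiff_cancel_left (disjoint_of_mem hU), show A ∪ U = A ∪ U' from h,
      union_sdiff_cancel_left (disjoint_of_mem hU')]

theorem sum_filter_superset_neg_one_pow_div_card {K : Type*} [Field K] [CharZero K]
    {A : Finset α} (hA : A.Nonempty) :
    ∑ S ∈ univ.filter (A ⊆ ·), (-1 : K) ^ (#S - #A) / #S =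
      (#A - 1)! * (Fintype.card α - #A)! / (Fintype.card α)! := by
  obtain ⟨t, hAt⟩ : ∃ t, #A = t + 1 := Nat.exists_eq_add_one.2 hA.card_pos
  obtain ⟨m, hαm⟩ : ∃ m, Fintype.card α = t + 1 + m :=
    Nat.exists_eq_add_of_le (hAt ▸ card_le_univ A)
  rw [sum_filter_superset_apply_card A (fun c => (-1 : K) ^ (c - #A) / c), card_compl, hAt, hαm,
    Nat.add_sub_cancel_left, Nat.add_sub_cancel, show t + 1 + m = t + m + 1 by ring,
    ← sum_range_choose_mul_neg_one_pow_div]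
  refine sum_congr rfl fun k _ => ?_
  rw [nsmul_eq_mul, Nat.add_sub_cancel_left]
  push_cast
  rfl

theorem sum_filter_insert_subset_neg_one_pow_div_card {K : Type*} [Field K] [CharZero K]
    {i : α} {T : Finset α} (hi : i ∉ T) :
    ∑ S ∈ univ.filter (insert i T ⊆ ·), (-1 : K) ^ (#S - #T) / #S =
      -((#T)! * (Fintype.card α - #T - 1)! / (Fintype.card α)!) := by
  have key := sum_filter_superset_neg_one_pow_div_card (K := K) (insert_nonempty i T)
  rw [card_insert_of_notMem hi, Nat.add_sub_cancel, ← Nat.sub_sub] at key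
  rw [← key, ← sum_neg_distrib]
  refine sum_congr rfl fun S hS => ?_
  have hTS : #T + 1 ≤ #S := card_insert_of_notMem hi ▸ card_le_card (mem_filter.1 hS).2
  rw [show #S - #T = #S - (#T + 1) + 1 by omega, pow_succ]
  ring

theorem sum_eq_sum_powerset_erase_add_insert {M : Type*} [AddCommMonoid M] (i : α)
    (f : Finset α → M) :
    ∑ T, f T = ∑ T ∈ (univ.erase i).powerset, (f T + f (insert i T)) := by
  conv_lhs => rw [← powerset_univ, ← insert_erase (mem_univ i)]
  rw [sum_powerset_insert (notMem_erase i univ), sum_add_distrib]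

end Supersets

/-- **Shapley value as equal division of synergies.** Let `N` be a finite set of players,
`v : 𝒫(N) → ℝ` a coalition value function, and `w(R) = Σ_{T ⊆ R} (−1)^(|R|−|T|) v(T)` the
synergy of coalition `R`. Then for every player `i`,
`Σ_{S ⊆ N, i ∈ S} w(S)/|S| = Σ_{S ⊆ N \ {i}} (|S|! (|N|−|S|−1)! / |N|!) (v(S ∪ {i}) − v(S))`. -/
theorem shapley_from_synergy {N : Type*} [Fintype N] [DecidableEq N]
    (v w : Finset N → ℝ)
    (hw : ∀ R : Finset N, w R = ∑ T ∈ R.powerset, (-1 : ℝ) ^ (R.card - T.card) * v T)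
    (i : N) :
    ∑ S ∈ univ.filter (fun S : Finset N => i ∈ S), w S / S.card =
      ∑ S ∈ ((univ : Finset N).erase i).powerset,
        ((S.card.factorial * (Fintype.card N - S.card - 1).factorial : ℝ) /
            (Fintype.card N).factorial) * (v (insert i S) - v S) := by
  calc ∑ S ∈ univ.filter (i ∈ ·), w S / #S
      = ∑ S ∈ univ.filter (i ∈ ·), ∑ T ∈ S.powerset, (-1 : ℝ) ^ (#S - #T) * v T / #S :=
        sum_congr rfl fun S _ => by rw [hw, sum_div]
    _ = ∑ T, ∑ S ∈ univ.filter (insert i T ⊆ ·), (-1 : ℝ) ^ (#S - #T) * v T / #S :=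
        sum_comm' fun S T => by simp [insert_subset_iff]
    _ = ∑ T, (∑ S ∈ univ.filter (insert i T ⊆ ·), (-1 : ℝ) ^ (#S - #T) / #S) * v T := by
        simp only [sum_mul, mul_div_right_comm]
    _ = _ := by
        rw [sum_eq_sum_powerset_erase_add_insert i]
        refine sum_congr rfl fun T hT => ?_
        have hi : i ∉ T := fun h => notMem_erase i univ (mem_powerset.1 hT h)
        rw [insert_idem, sum_filter_insert_subset_neg_one_pow_div_card hi,
          sum_filter_superset_neg_one_pow_div_card (insert_nonempty i T),
          card_insert_of_notMem hi, Nat.add_sub_cancel, ← Nat.sub_sub]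
        ring
end
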